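/- (Corollary of the decomposition and monotonicity results.) For each t ∈ {0,1,…,T}, the joint value function V_t(x,k) is non-decreasing in x in the componentwise order — for x, x' ∈ ℕ^N with x_i ≤ x'_i for all i, V_t(x,k) ≤ V_t(x',k) — and non-decreasing in k: for k ≤ k', V_t(x,k) ≤ V_t(x,k'). -/

import Mathlib

open Filter

/-- Negative Binomial pmf with real shape `r` and success probability `p`:
`NB(r,p)(z) = Γ(z+r)/(Γ(r)·z!)·p^r·(1−p)^z` for `r > 0`, and `NB(0,p)` is
the point mass at `0`. -/
noncomputable def NB (r p : ℝ) (z : ℕ) : ℝ :=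
  if r = 0 then (if z = 0 then (1 : ℝ) else 0)
  else Real.Gamma ((z : ℝ) + r) / (Real.Gamma r * (Nat.factorial z : ℝ)) * p ^ r * (1 - p) ^ z

/-- `p_t = (β0 + N·t)/(β0 + N·t + 1)`. -/
noncomputable def pt (β0 : ℝ) (N t : ℕ) : ℝ :=
  (β0 + (N : ℝ) * (t : ℝ)) / (β0 + (N : ℝ) * (t : ℝ) + 1)

/-- Expectation `E_{(Z,K)}[f(Z,K)]` with `Z ~ NB(α0+k, p_t)` and
`K ~ NB((N−1)(α0+k), p_t)` independent. -/
noncomputable def EZK (α0 β0 : ℝ) (N t k : ℕ) (f : ℕ → ℕ → ℝ) : ℝ :=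
  ∑' z : ℕ, ∑' κ : ℕ,
    NB (α0 + (k : ℝ)) (pt β0 N t) z * NB (((N : ℝ) - 1) * (α0 + (k : ℝ))) (pt β0 N t) κ * f z κ

/-! Backward induction on `t`: the Bellman operator maps functions of `(x, k)` that are bounded,
nonnegative and monotone for the product order to functions of the same kind.
Monotonicity in `x` holds because a larger `x` admits fewer actions and costs more at every stage.
Monotonicity in `k` is a coupling: by Chu–Vandermonde for `Ring.multichoose`,
`NB(α0 + k') = NB(α0 + k) ⋆ NB(k' - k)`, so a draw `z` at shape `α0 + k` extends to a draw `z + u`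
at shape `α0 + k'`, and passing from `(x + z, k + ∑ z)` to `(x + z + u, k' + ∑ (z + u))` can only
increase `V (t + 1)`. -/

open Finset
open scoped ENNReal NNReal

lemma Real.Gamma_natCast_add {r : ℝ} (hr : 0 < r) (n : ℕ) :
    Real.Gamma (n + r) = (ascPochhammer ℝ n).eval r * Real.Gamma r := by
  induction n with
  | zero => simp
  | succ n ih =>
    rw [Nat.cast_succ, add_right_comm, Real.Gamma_add_one (by positivity), ih,
      ascPochhammer_succ_eval]
    ring

lemma Ring.add_multichoose_eq {R : Type*} [CommRing R] [BinomialRing R] (r s : R) (k : ℕ) :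
    Ring.multichoose (r + s) k =
      ∑ ij ∈ antidiagonal k, Ring.multichoose r ij.1 * Ring.multichoose s ij.2 := by
  have h := Ring.add_choose_eq (r := -r) (s := -s) k (Commute.all _ _)
  rw [← neg_add, Ring.choose_neg'] at h
  rw [← smul_left_cancel_iff (Int.negOnePow k), h, smul_sum]
  refine sum_congr rfl fun ij hij => ?_
  rw [Ring.choose_neg', Ring.choose_neg', smul_mul_smul_comm, ← Int.negOnePow_add, ← Nat.cast_add,
    mem_antidiagonal.1 hij]

lemma NB_eq_multichoose {r : ℝ} (hr : 0 < r) (p : ℝ) (z : ℕ) :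
    NB r p z = Ring.multichoose r z * p ^ r * (1 - p) ^ z := by
  have hfac : (z.factorial : ℝ) * Ring.multichoose r z = (ascPochhammer ℝ z).eval r := by
    rw [← nsmul_eq_mul, Ring.factorial_nsmul_multichoose_eq_ascPochhammer,
      Polynomial.ascPochhammer_smeval_eq_eval]
  rw [NB, if_neg hr.ne', Real.Gamma_natCast_add hr, ← hfac]
  field_simp [(Real.Gamma_pos_of_pos hr).ne', z.factorial_ne_zero]

lemma NB_nonneg {r p : ℝ} (hr : 0 ≤ r) (hp0 : 0 ≤ p) (hp1 : p ≤ 1) (z : ℕ) : 0 ≤ NB r p z := by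
  rcases hr.eq_or_lt with rfl | hr
  · simp only [NB, if_true]; split_ifs <;> norm_num
  · have : 0 ≤ 1 - p := by linarith
    rw [NB, if_neg hr.ne']
    have := Real.Gamma_pos_of_pos hr
    have := Real.Gamma_pos_of_pos (show 0 < (z : ℝ) + r by positivity)
    positivity

lemma hasSum_NB {r p : ℝ} (hr : 0 < r) (hp : |1 - p| < 1) : HasSum (NB r p) 1 := by
  have hp0 : 0 < p := by linarith [(abs_lt.1 hp).2]
  have h := (Real.one_div_one_sub_rpow_hasFPowerSeriesOnBall_zero r).hasSum (y := 1 - p)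
    (by simpa [Metric.eball, edist_dist, Real.dist_eq] using hp)
  simp only [FormalMultilinearSeries.ofScalars_apply_eq, zero_add, sub_sub_cancel,
    smul_eq_mul] at h
  have h' := h.mul_left (p ^ r)
  rw [mul_one_div_cancel (Real.rpow_pos_of_pos hp0 r).ne'] at h'
  have hNB : NB r p = fun z : ℕ => p ^ r * (Ring.choose (r + z - 1) z * (1 - p) ^ z) := by
    ext z
    rw [NB_eq_multichoose hr, Ring.multichoose_eq]
    ring
  rwa [hNB]

lemma NB_add {r s p : ℝ} (hr : 0 < r) (hs : 0 < s) (hp : 0 ≤ p) (m : ℕ) :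
    ∑ ij ∈ antidiagonal m, NB r p ij.1 * NB s p ij.2 = NB (r + s) p m := by
  rw [NB_eq_multichoose (by positivity), Ring.add_multichoose_eq, Real.rpow_add' hp (by positivity),
    sum_mul, sum_mul]
  refine sum_congr rfl fun ij hij => ?_
  rw [NB_eq_multichoose hr, NB_eq_multichoose hs, ← mem_antidiagonal.1 hij, pow_add]
  ring

lemma ENNReal.tsum_pi_prod {β : Type*} : ∀ {n : ℕ} (g : Fin n → β → ℝ≥0∞),
    ∑' q : Fin n → β, ∏ i, g i (q i) = ∏ i, ∑' b, g i b
  | 0, g => by simp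
  | n + 1, g => by
    rw [← (Fin.consEquiv fun _ => β).tsum_eq, Fin.prod_univ_succ]
    simp only [Fin.consEquiv_apply, Fin.prod_univ_succ, Fin.cons_zero, Fin.cons_succ]
    rw [ENNReal.tsum_prod', ← ENNReal.tsum_mul_right]
    simp only [ENNReal.tsum_mul_left, ENNReal.tsum_pi_prod fun i => g i.succ]

lemma ENNReal.tsum_tsum_prod_mul_prod_add {n : ℕ} (W U C : ℕ → ℝ≥0∞)
    (hC : ∀ m, C m = ∑ ij ∈ antidiagonal m, W ij.1 * U ij.2) (f : (Fin n → ℕ) → ℝ≥0∞) :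
    ∑' (z : Fin n → ℕ) (u : Fin n → ℕ), (∏ i, W (z i)) * (∏ i, U (u i)) * f (z + u) =
      ∑' m : Fin n → ℕ, (∏ i, C (m i)) * f m := by
  classical
  let sum : (Fin n → ℕ × ℕ) → Fin n → ℕ := fun q i => (q i).1 + (q i).2
  calc ∑' (z : Fin n → ℕ) (u : Fin n → ℕ), (∏ i, W (z i)) * (∏ i, U (u i)) * f (z + u)
      = ∑' q : Fin n → ℕ × ℕ, (∏ i, W (q i).1 * U (q i).2) * f (sum q) := by
        rw [← (Equiv.arrowProdEquivProdArrow (Fin n) (fun _ => ℕ) (fun _ => ℕ)).symm.tsum_eq,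
          ENNReal.tsum_prod']
        simp [prod_mul_distrib, sum, Pi.add_def, Equiv.arrowProdEquivProdArrow]
    _ = ∑' (m : Fin n → ℕ) (q : {q // sum q = m}), (∏ i, W (q.1 i).1 * U (q.1 i).2) * f m := by
        rw [← (Equiv.sigmaFiberEquiv sum).tsum_eq, ENNReal.tsum_sigma']
        refine tsum_congr fun m => tsum_congr fun q => ?_
        simp [Equiv.sigmaFiberEquiv, q.2]
    _ = ∑' m : Fin n → ℕ, (∏ i, C (m i)) * f m := by
        refine tsum_congr fun m => ?_
        let fiberEquiv : {q // sum q = m} ≃ Fintype.piFinset fun i => antidiagonal (m i) :=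
          Equiv.subtypeEquivRight fun q => by simp [sum, Fintype.mem_piFinset, funext_iff]
        rw [ENNReal.tsum_mul_right]
        congr 1
        simp only [hC]
        rw [prod_univ_sum, ← Finset.tsum_subtype, ← fiberEquiv.tsum_eq]
        rfl

noncomputable def nbExpect {n : ℕ} (r p : ℝ) (f : (Fin n → ℕ) → ℝ) : ℝ :=
  ∑' z, (∏ i, NB r p (z i)) * f z

section nbExpect

variable {n : ℕ} {r p C : ℝ}

lemma prod_NB_nonneg (hr : 0 ≤ r) (hp0 : 0 ≤ p) (hp1 : p ≤ 1) (z : Fin n → ℕ) :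
    0 ≤ ∏ i, NB r p (z i) :=
  prod_nonneg fun _ _ => NB_nonneg hr hp0 hp1 _

lemma ofReal_prod_NB (hr : 0 ≤ r) (hp0 : 0 ≤ p) (hp1 : p ≤ 1) (z : Fin n → ℕ) :
    ENNReal.ofReal (∏ i, NB r p (z i)) = ∏ i, ENNReal.ofReal (NB r p (z i)) :=
  ENNReal.ofReal_prod_of_nonneg fun _ _ => NB_nonneg hr hp0 hp1 _

lemma tsum_prod_ofReal_NB (hr : 0 < r) (hp0 : 0 < p) (hp1 : p ≤ 1) :
    ∑' z : Fin n → ℕ, ∏ i, ENNReal.ofReal (NB r p (z i)) = 1 := by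
  have hNB := hasSum_NB hr (abs_lt.2 ⟨by linarith, by linarith⟩ : |1 - p| < 1)
  rw [ENNReal.tsum_pi_prod fun _ z => ENNReal.ofReal (NB r p z),
    ← ENNReal.ofReal_tsum_of_nonneg (NB_nonneg hr.le hp0.le hp1) hNB.summable, hNB.tsum_eq]
  simp

lemma hasSum_prod_NB (hr : 0 < r) (hp0 : 0 < p) (hp1 : p ≤ 1) :
    HasSum (fun z : Fin n → ℕ => ∏ i, NB r p (z i)) 1 := by
  have hE : HasSum (fun z : Fin n → ℕ => ((∏ i, NB r p (z i)).toNNReal : ℝ≥0∞)) (1 : ℝ≥0) := by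
    rw [ENNReal.coe_one, ← tsum_prod_ofReal_NB hr hp0 hp1]
    simp only [← ofReal_prod_NB hr.le hp0.le hp1]
    exact ENNReal.summable.hasSum
  simpa [Real.coe_toNNReal _ (prod_NB_nonneg hr.le hp0.le hp1 _)] using
    NNReal.hasSum_coe.2 (ENNReal.hasSum_coe.1 hE)

lemma summable_prod_NB_mul (hr : 0 < r) (hp0 : 0 < p) (hp1 : p ≤ 1)
    {f : (Fin n → ℕ) → ℝ} (hf : ∀ z, f z ∈ Set.Icc 0 C) :
    Summable fun z => (∏ i, NB r p (z i)) * f z := by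
  have hw := prod_NB_nonneg (n := n) hr.le hp0.le hp1
  exact ((hasSum_prod_NB hr hp0 hp1).summable.mul_right C).of_nonneg_of_le
    (fun z => mul_nonneg (hw z) (hf z).1) (fun z => mul_le_mul_of_nonneg_left (hf z).2 (hw z))

lemma nbExpect_mem_Icc (hr : 0 < r) (hp0 : 0 < p) (hp1 : p ≤ 1)
    {f : (Fin n → ℕ) → ℝ} (hf : ∀ z, f z ∈ Set.Icc 0 C) : nbExpect r p f ∈ Set.Icc 0 C := by
  have hw := prod_NB_nonneg (n := n) hr.le hp0.le hp1
  refine ⟨tsum_nonneg fun z => mul_nonneg (hw z) (hf z).1, ?_⟩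
  have hC := (hasSum_prod_NB (n := n) hr hp0 hp1).mul_right C
  rw [one_mul] at hC
  exact hasSum_le (fun z => mul_le_mul_of_nonneg_left (hf z).2 (hw z))
    (summable_prod_NB_mul hr hp0 hp1 hf).hasSum hC

lemma nbExpect_mono (hr : 0 < r) (hp0 : 0 < p) (hp1 : p ≤ 1) {f g : (Fin n → ℕ) → ℝ}
    (hf : ∀ z, f z ∈ Set.Icc 0 C) (hg : ∀ z, g z ∈ Set.Icc 0 C) (hfg : f ≤ g) :
    nbExpect r p f ≤ nbExpect r p g :=
  (summable_prod_NB_mul hr hp0 hp1 hf).tsum_le_tsum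
    (fun z => mul_le_mul_of_nonneg_left (hfg z) (prod_NB_nonneg hr.le hp0.le hp1 z))
    (summable_prod_NB_mul hr hp0 hp1 hg)

lemma ofReal_nbExpect (hr : 0 < r) (hp0 : 0 < p) (hp1 : p ≤ 1)
    {f : (Fin n → ℕ) → ℝ} (hf : ∀ z, f z ∈ Set.Icc 0 C) :
    ENNReal.ofReal (nbExpect r p f) =
      ∑' z, (∏ i, ENNReal.ofReal (NB r p (z i))) * ENNReal.ofReal (f z) := by
  have hw := prod_NB_nonneg (n := n) hr.le hp0.le hp1
  rw [nbExpect, ENNReal.ofReal_tsum_of_nonneg (fun z => mul_nonneg (hw z) (hf z).1)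
    (summable_prod_NB_mul hr hp0 hp1 hf)]
  simp only [ENNReal.ofReal_mul (hw _), ofReal_prod_NB hr.le hp0.le hp1]

lemma nbExpect_le_nbExpect_add {s : ℝ} (hr : 0 < r) (hs : 0 < s) (hp0 : 0 < p) (hp1 : p ≤ 1)
    {f g : (Fin n → ℕ) → ℝ} (hf : ∀ z, 0 ≤ f z) (hg : ∀ z, g z ∈ Set.Icc 0 C)
    (hfg : ∀ z u, f z ≤ g (z + u)) :
    nbExpect r p f ≤ nbExpect (r + s) p g := by
  have hf' : ∀ z, f z ∈ Set.Icc 0 C := fun z => ⟨hf z, by simpa using (hfg z 0).trans (hg z).2⟩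
  have hrs : 0 < r + s := by positivity
  rw [← ENNReal.ofReal_le_ofReal_iff (nbExpect_mem_Icc hrs hp0 hp1 hg).1,
    ofReal_nbExpect hr hp0 hp1 hf', ofReal_nbExpect hrs hp0 hp1 hg]
  set W : ℕ → ℝ≥0∞ := fun j => ENNReal.ofReal (NB r p j)
  set U : ℕ → ℝ≥0∞ := fun j => ENNReal.ofReal (NB s p j)
  have hconv : ∀ m, ENNReal.ofReal (NB (r + s) p m) = ∑ ij ∈ antidiagonal m, W ij.1 * U ij.2 := by
    intro m
    rw [← NB_add hr hs hp0.le, ENNReal.ofReal_sum_of_nonneg fun ij _ =>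
      mul_nonneg (NB_nonneg hr.le hp0.le hp1 _) (NB_nonneg hs.le hp0.le hp1 _)]
    exact sum_congr rfl fun ij _ => ENNReal.ofReal_mul (NB_nonneg hr.le hp0.le hp1 _)
  calc ∑' z, (∏ i, W (z i)) * ENNReal.ofReal (f z)
      = ∑' (z : Fin n → ℕ) (u : Fin n → ℕ),
          (∏ i, W (z i)) * (∏ i, U (u i)) * ENNReal.ofReal (f z) := by
        refine tsum_congr fun z => ?_
        rw [ENNReal.tsum_mul_right, ENNReal.tsum_mul_left, tsum_prod_ofReal_NB hs hp0 hp1, mul_one]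
    _ ≤ ∑' (z : Fin n → ℕ) (u : Fin n → ℕ),
          (∏ i, W (z i)) * (∏ i, U (u i)) * ENNReal.ofReal (g (z + u)) := by
        gcongr with z u
        exact hfg z u
    _ = _ := ENNReal.tsum_tsum_prod_mul_prod_add W U _ hconv fun m => ENNReal.ofReal (g m)

end nbExpect

lemma pt_pos {β0 : ℝ} (hβ0 : 0 < β0) (N t : ℕ) : 0 < pt β0 N t := by
  unfold pt
  positivity

lemma pt_le_one {β0 : ℝ} (hβ0 : 0 ≤ β0) (N t : ℕ) : pt β0 N t ≤ 1 :=
  div_le_one_of_le₀ (by linarith) (by positivity)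

section Bellman

variable {n : ℕ} (ξ : Fin n → ℕ) (cp cu : Fin n → ℝ)

noncomputable def failureCost (x : Fin n → ℕ) : ℝ :=
  ∑ i, if ξ i ≤ x i then cu i else 0

noncomputable def stageCost (x : Fin n → ℕ) (a : Fin n → Bool) : ℝ :=
  ∑ i, ((if a i = true ∧ x i < ξ i then cp i else 0) + (if ξ i ≤ x i then cu i else 0))

def reset (a : Fin n → Bool) (x : Fin n → ℕ) : Fin n → ℕ :=
  fun i => if a i then 0 else x i

noncomputable def bellman (r0 p : ℝ) (W : (Fin n → ℕ) → ℕ → ℝ) (x : Fin n → ℕ) (k : ℕ) : ℝ :=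
  ⨅ a : {a : Fin n → Bool // ∀ i, ξ i ≤ x i → a i = true},
    stageCost ξ cp cu x a + nbExpect (r0 + k) p fun z => W (reset a x + z) (k + ∑ i, z i)

instance (x : Fin n → ℕ) : Nonempty {a : Fin n → Bool // ∀ i, ξ i ≤ x i → a i = true} :=
  ⟨⟨fun _ => true, fun _ _ => rfl⟩⟩

variable {ξ cp cu}

lemma failureCost_mem_Icc (hcu : ∀ i, 0 ≤ cu i) (x : Fin n → ℕ) :
    failureCost ξ cu x ∈ Set.Icc 0 (∑ i, cu i) :=
  ⟨sum_nonneg fun i _ => by split_ifs <;> simp [hcu i],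
    sum_le_sum fun i _ => by split_ifs <;> simp [hcu i]⟩

lemma monotone_failureCost (hcu : ∀ i, 0 ≤ cu i) : Monotone (failureCost ξ cu) :=
  fun x x' hx => sum_le_sum fun i _ => by
    have hxi : x i ≤ x' i := hx i
    split_ifs <;> linarith [hcu i]

lemma stageCost_mem_Icc (hcp : ∀ i, 0 ≤ cp i) (hcpcu : ∀ i, cp i ≤ cu i)
    (x : Fin n → ℕ) (a : Fin n → Bool) : stageCost ξ cp cu x a ∈ Set.Icc 0 (∑ i, cu i) := by
  refine ⟨sum_nonneg fun i _ => ?_, sum_le_sum fun i _ => ?_⟩ <;>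
  · have := hcp i; have := hcpcu i
    split_ifs <;> linarith

lemma stageCost_mono (hcp : ∀ i, 0 ≤ cp i) (hcpcu : ∀ i, cp i ≤ cu i) {x x' : Fin n → ℕ}
    (hx : x ≤ x') (a : Fin n → Bool) : stageCost ξ cp cu x a ≤ stageCost ξ cp cu x' a :=
  sum_le_sum fun i _ => by
    have hxi : x i ≤ x' i := hx i
    have := hcp i; have := hcpcu i
    grind

lemma reset_mono (a : Fin n → Bool) : Monotone (reset a) :=
  fun x x' hx i => by by_cases h : a i <;> simp [reset, h, hx i]

variable {r0 p C : ℝ} {W : (Fin n → ℕ) → ℕ → ℝ}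

lemma bellman_mem_Icc (hcp : ∀ i, 0 ≤ cp i) (hcpcu : ∀ i, cp i ≤ cu i) (hr0 : 0 < r0)
    (hp0 : 0 < p) (hp1 : p ≤ 1) (hW : ∀ x k, W x k ∈ Set.Icc 0 C) (x : Fin n → ℕ) (k : ℕ) :
    bellman ξ cp cu r0 p W x k ∈ Set.Icc 0 (∑ i, cu i + C) := by
  have hr : 0 < r0 + k := by positivity
  refine ⟨le_ciInf fun a => ?_,
    (ciInf_le (Finite.bddBelow_range _) ⟨fun _ => true, fun _ _ => rfl⟩).trans ?_⟩
  · exact add_nonneg (stageCost_mem_Icc hcp hcpcu x a).1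
      (nbExpect_mem_Icc hr hp0 hp1 fun z => hW _ _).1
  · exact add_le_add (stageCost_mem_Icc hcp hcpcu x _).2
      (nbExpect_mem_Icc hr hp0 hp1 fun z => hW _ _).2

lemma bellman_mono_state (hcp : ∀ i, 0 ≤ cp i) (hcpcu : ∀ i, cp i ≤ cu i) (hr0 : 0 < r0)
    (hp0 : 0 < p) (hp1 : p ≤ 1) (hW : ∀ x k, W x k ∈ Set.Icc 0 C)
    (hWm : Monotone (Function.uncurry W)) {x x' : Fin n → ℕ} (hx : x ≤ x') (k : ℕ) :
    bellman ξ cp cu r0 p W x k ≤ bellman ξ cp cu r0 p W x' k := by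
  have hr : 0 < r0 + k := by positivity
  refine le_ciInf fun a => (ciInf_le (Finite.bddBelow_range _)
    ⟨a.1, fun i hi => a.2 i (hi.trans (hx i))⟩).trans (add_le_add (stageCost_mono hcp hcpcu hx a)
      (nbExpect_mono hr hp0 hp1 (fun z => hW _ _) (fun z => hW _ _) fun z => ?_))
  exact hWm (show (_, _) ≤ (_, _) from ⟨add_le_add_left (reset_mono a hx) z, le_rfl⟩)

lemma bellman_mono_count (hr0 : 0 < r0) (hp0 : 0 < p) (hp1 : p ≤ 1)
    (hW : ∀ x k, W x k ∈ Set.Icc 0 C) (hWm : Monotone (Function.uncurry W))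
    (x : Fin n → ℕ) {k k' : ℕ} (hk : k ≤ k') :
    bellman ξ cp cu r0 p W x k ≤ bellman ξ cp cu r0 p W x k' := by
  rcases hk.eq_or_lt with rfl | hlt
  · exact le_rfl
  refine ciInf_mono (Finite.bddBelow_range _) fun a => add_le_add le_rfl ?_
  have hr' : (r0 + k' : ℝ) = (r0 + k) + ((k' : ℝ) - k) := by ring
  rw [hr']
  refine nbExpect_le_nbExpect_add (by positivity) (by simpa using hlt) hp0 hp1
    (fun z => (hW _ _).1) (fun z => hW _ _) fun z u => hWm (show (_, _) ≤ (_, _) from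
      ⟨add_le_add le_rfl le_self_add, add_le_add hk (sum_le_sum fun i _ => Nat.le_add_right _ _)⟩)

lemma monotone_bellman (hcp : ∀ i, 0 ≤ cp i) (hcpcu : ∀ i, cp i ≤ cu i) (hr0 : 0 < r0)
    (hp0 : 0 < p) (hp1 : p ≤ 1) (hW : ∀ x k, W x k ∈ Set.Icc 0 C)
    (hWm : Monotone (Function.uncurry W)) :
    Monotone (Function.uncurry (bellman ξ cp cu r0 p W)) := by
  rintro ⟨x, k⟩ ⟨x', k'⟩ ⟨hx, hk⟩
  exact (bellman_mono_state hcp hcpcu hr0 hp0 hp1 hW hWm hx k).trans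
    (bellman_mono_count hr0 hp0 hp1 hW hWm x' hk)

end Bellman

theorem joint_value_monotone_general
    (α0 β0 : ℝ) (hα0 : 0 < α0) (hβ0 : 0 < β0)
    (N T : ℕ)
    (ξ : Fin N → ℕ)
    (cp cu : Fin N → ℝ) (hcp : ∀ i, 0 < cp i) (hcpcu : ∀ i, cp i < cu i)
    (V : ℕ → (Fin N → ℕ) → ℕ → ℝ)
    (hVT : ∀ x k, V T x k = ∑ i, if ξ i ≤ x i then cu i else 0)
    (hV : ∀ t, t < T → ∀ x k,
      V t x k = ⨅ a : {a : Fin N → Bool // ∀ i, ξ i ≤ x i → a i = true},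
        ((∑ i, ((if a.1 i = true ∧ x i < ξ i then cp i else 0)
              + (if ξ i ≤ x i then cu i else 0)))
         + ∑' z : Fin N → ℕ,
             (∏ i, NB (α0 + (k : ℝ)) (pt β0 N t) (z i)) *
               V (t + 1) (fun i => (if a.1 i then 0 else x i) + z i) (k + ∑ i, z i))) :
    ∀ t ≤ T,
      (∀ (x x' : Fin N → ℕ), (∀ i, x i ≤ x' i) → ∀ k : ℕ, V t x k ≤ V t x' k) ∧
      (∀ (x : Fin N → ℕ) (k k' : ℕ), k ≤ k' → V t x k ≤ V t x k') := by
  have hcp' : ∀ i, 0 ≤ cp i := fun i => (hcp i).le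
  have hcpcu' : ∀ i, cp i ≤ cu i := fun i => (hcpcu i).le
  have hcu : ∀ i, 0 ≤ cu i := fun i => (hcp' i).trans (hcpcu' i)
  have hterm : V T = fun x _ => failureCost ξ cu x := funext₂ hVT
  have hstep : ∀ t < T, V t = bellman ξ cp cu α0 (pt β0 N t) (V (t + 1)) :=
    fun t ht => funext₂ (hV t ht)
  suffices h : ∀ t ≤ T, (∃ C, ∀ x k, V t x k ∈ Set.Icc 0 C) ∧ Monotone (Function.uncurry (V t)) from
    fun t ht => ⟨fun x x' hx k => (h t ht).2 (show (x, k) ≤ (x', k) from ⟨hx, le_rfl⟩),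
      fun x k k' hk => (h t ht).2 (show (x, k) ≤ (x, k') from ⟨le_rfl, hk⟩)⟩
  intro t ht
  induction ht using Nat.decreasingInduction with
  | self =>
    rw [hterm]
    exact ⟨⟨_, fun x _ => failureCost_mem_Icc hcu x⟩, fun _ _ h => monotone_failureCost hcu h.1⟩
  | of_succ t ht ih =>
    obtain ⟨⟨C, hC⟩, hmono⟩ := ih
    rw [hstep t ht]
    exact ⟨⟨_, bellman_mem_Icc hcp' hcpcu' hα0 (pt_pos hβ0 N t) (pt_le_one hβ0.le N t) hC⟩,
      monotone_bellman hcp' hcpcu' hα0 (pt_pos hβ0 N t) (pt_le_one hβ0.le N t) hC hmono⟩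

/-- The joint value function is non-decreasing in `x` (componentwise) and in `k`. -/
theorem joint_value_monotone
    (α0 β0 : ℝ) (hα0 : 0 < α0) (hβ0 : 0 < β0)
    (N T : ℕ) (hN : 1 ≤ N) (hT : 1 ≤ T)
    (ξ : Fin N → ℕ) (hξ : ∀ i, 1 ≤ ξ i)
    (cp cu : Fin N → ℝ) (hcp : ∀ i, 0 < cp i) (hcpcu : ∀ i, cp i < cu i)
    (V : ℕ → (Fin N → ℕ) → ℕ → ℝ)
    (hVT : ∀ x k, V T x k = ∑ i, if ξ i ≤ x i then cu i else 0)
    (hV : ∀ t, t < T → ∀ x k,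
      V t x k = ⨅ a : {a : Fin N → Bool // ∀ i, ξ i ≤ x i → a i = true},
        ((∑ i, ((if a.1 i = true ∧ x i < ξ i then cp i else 0)
              + (if ξ i ≤ x i then cu i else 0)))
         + ∑' z : Fin N → ℕ,
             (∏ i, NB (α0 + (k : ℝ)) (pt β0 N t) (z i)) *
               V (t + 1) (fun i => (if a.1 i then 0 else x i) + z i) (k + ∑ i, z i))) :
    ∀ t ≤ T,
      (∀ (x x' : Fin N → ℕ), (∀ i, x i ≤ x' i) → ∀ k : ℕ, V t x k ≤ V t x' k) ∧
      (∀ (x : Fin N → ℕ) (k k' : ℕ), k ≤ k' → V t x k ≤ V t x k') :=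
  joint_value_monotone_general α0 β0 hα0 hβ0 N T ξ cp cu hcp hcpcu V hVT hV
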